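/- arXiv:cs/9907038 — 3 statements merged into one kernel-verified Lean document; each statement's English description precedes it below -/
import Mathlib

section
/- Rice's Theorem, Version I. Let 𝔸 be a collection of subsets of ℕ that is a nonempty proper subset of the class of computably enumerable sets, i.e., there is a code c with W_c ∈ 𝔸 and a code c' with W_{c'} ∉ 𝔸. Then either the halting problem K many-one reduces to the index set I_𝔸 = {c | W_c ∈ 𝔸}, or the complement of K many-one reduces to I_𝔸. -/
/-!
Running `c` on its own index before running `d` yields, computably in `c`, a code whose
language is `W_d` if `c ∈ K` and `∅` otherwise. If `∅ ∉ 𝔸`, taking `W_d ∈ 𝔸` makes this a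
reduction of `K` to the index set of `𝔸`; if `∅ ∈ 𝔸`, taking `W_d ∉ 𝔸` reduces `K` to the
complement of the index set, i.e. the complement of `K` to the index set itself.
-/

open Nat.Partrec (Code)
open Nat.Partrec.Code

theorem ManyOneReducible.not {α β : Type*} [Primcodable α] [Primcodable β]
    {p : α → Prop} {q : β → Prop} (h : p ≤₀ q) : (fun a => ¬p a) ≤₀ fun b => ¬q b :=
  let ⟨f, hf, hpq⟩ := h
  ⟨f, hf, fun a => not_congr (hpq a)⟩

namespace Nat.Partrec.Code

def language (c : Code) : Set ℕ :=
  {n | (eval c n).Dom}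

def Halts (c : Code) : Prop :=
  (eval c (Encodable.encode c)).Dom

theorem exists_computable_eval_eq {α : Type*} [Primcodable α] {F : α → ℕ →. ℕ}
    (hF : Partrec₂ F) : ∃ f : α → Code, Computable f ∧ ∀ a, eval (f a) = F a :=
  let ⟨cF, eF⟩ := exists_code.1 hF
  ⟨fun a => curry cF (Encodable.encode a),
    (primrec₂_curry.comp (_root_.Primrec.const cF) Primrec.encode).to_comp,
    fun a => funext fun n => by simp [eval_curry, eF, Part.map_id']⟩

theorem exists_computable_language_eq_setOf_halts_and (d : Code) :
    ∃ f : Code → Code, Computable f ∧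
      ∀ c, language (f c) = {n | Halts c ∧ n ∈ language d} := by
  have hF : Partrec₂ fun (c : Code) (n : ℕ) =>
      (eval c (Encodable.encode c)).bind fun _ => eval d n :=
    (eval_part.comp Computable.fst (Computable.encode.comp Computable.fst)).bind
      (eval_part.comp (Computable.const d) (Computable.snd.comp Computable.fst))
  obtain ⟨f, hf, hfF⟩ := exists_computable_eval_eq hF
  refine ⟨f, hf, fun c => ?_⟩
  ext n
  simp [language, Halts, hfF, Part.bind_dom]

theorem halts_manyOneReducible_language_mem {𝔸 : Set (Set ℕ)} {d : Code}
    (hd : language d ∈ 𝔸) (hempty : ∅ ∉ 𝔸) : Halts ≤₀ fun c => language c ∈ 𝔸 := by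
  obtain ⟨f, hf, hfd⟩ := exists_computable_language_eq_setOf_halts_and d
  refine ⟨f, hf, fun c => ?_⟩
  by_cases hc : Halts c <;> simp [hfd, hc, hd, hempty]

end Nat.Partrec.Code

/-- Rice's Theorem, Version I: for any collection 𝔸 of subsets of ℕ that is a
nonempty proper subset of the class of c.e. sets, either the halting problem K
or its complement many-one reduces to the index set {c | W_c ∈ 𝔸}. -/
theorem rice_version_I (𝔸 : Set (Set ℕ))
    (hnonempty : ∃ c : Code, {n : ℕ | (eval c n).Dom} ∈ 𝔸)
    (hproper : ∃ c' : Code, {n : ℕ | (eval c' n).Dom} ∉ 𝔸) :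
    (fun c : Code => (eval c (Encodable.encode c)).Dom) ≤₀
        (fun c : Code => {n : ℕ | (eval c n).Dom} ∈ 𝔸) ∨
    (fun c : Code => ¬ (eval c (Encodable.encode c)).Dom) ≤₀
        (fun c : Code => {n : ℕ | (eval c n).Dom} ∈ 𝔸) := by
  obtain ⟨c₀, hc₀⟩ := hnonempty
  obtain ⟨c₁, hc₁⟩ := hproper
  by_cases hempty : (∅ : Set ℕ) ∈ 𝔸
  · right
    have hcompl := halts_manyOneReducible_language_mem (𝔸 := 𝔸ᶜ) hc₁ (not_not_intro hempty)
    have hnot := hcompl.not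
    simp only [Set.mem_compl_iff, not_not] at hnot
    exact hnot
  · exact Or.inl (halts_manyOneReducible_language_mem hc₀ hempty)
end

section
/- Constant-setting lemma (core of the proof of Theorem 5). Let A ⊆ ℕ be infinite with infinite complement, let k ∈ ℕ, and let M : ℕ → Bool be an arbitrary function. Then there exist natural numbers c_0, c_1, …, c_k such that for every j with 0 ≤ j ≤ k, the sum ∑_{i=0}^{j} (j choose i) · c_i lies in A if and only if M(j) = true. -/
/-! The coefficient of `c j` in the `j`-th sum is `(j choose j) = 1`, and `c j` does not occur
in the earlier sums. So the constants can be chosen one after another: once `c 0, …, c (j - 1)`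
are fixed, the `j`-th sum is their contribution `s` plus `c j`, and `c j` moves it onto any
prescribed infinite set, which contains an element `≥ s`. -/

open Finset

theorem Set.Infinite.exists_add_mem {S : Set ℕ} (hS : S.Infinite) (s : ℕ) : ∃ t, s + t ∈ S := by
  obtain ⟨n, hn, hsn⟩ := hS.exists_gt s
  exact ⟨n - s, by rwa [Nat.add_sub_cancel' hsn.le]⟩

theorem exists_unitriangular_sum_mem {a : ℕ → ℕ → ℕ} (ha : ∀ j, a j j = 1) {S : ℕ → Set ℕ}
    (hS : ∀ j, (S j).Infinite) (k : ℕ) :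
    ∃ c : ℕ → ℕ, ∀ j < k, ∑ i ∈ range (j + 1), a j i * c i ∈ S j := by
  induction k with
  | zero => exact ⟨0, fun j hj => absurd hj j.not_lt_zero⟩
  | succ k ih =>
    obtain ⟨c, hc⟩ := ih
    obtain ⟨t, ht⟩ := (hS k).exists_add_mem (∑ i ∈ range k, a k i * c i)
    have hagree : ∀ j, ∀ n ≤ k,
        ∑ i ∈ range n, a j i * Function.update c k t i = ∑ i ∈ range n, a j i * c i :=
      fun j n hn => sum_congr rfl fun i hi => by
        rw [Function.update_of_ne (by grind)]
    refine ⟨Function.update c k t, fun j hj => ?_⟩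
    rcases (Nat.lt_succ_iff_lt_or_eq.mp hj) with hjk | rfl
    · rw [hagree j (j + 1) hjk]
      exact hc j hjk
    · rwa [sum_range_succ, hagree j j le_rfl, ha, one_mul, Function.update_self]

/-- Constant-setting lemma: if `A ⊆ ℕ` is infinite and coinfinite, then for any
`k` and any `M : ℕ → Bool` there are constants `c_0, …, c_k` such that for each
`j ≤ k`, the sum `∑_{i=0}^{j} (j choose i) * c_i` is in `A` iff `M j = true`. -/
theorem constant_setting (A : Set ℕ) (hA : A.Infinite) (hAc : Aᶜ.Infinite)
    (k : ℕ) (M : ℕ → Bool) :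
    ∃ c : ℕ → ℕ, ∀ j ≤ k,
      ((∑ i ∈ Finset.range (j + 1), Nat.choose j i * c i) ∈ A ↔ M j = true) := by
  have hS : ∀ j, (if M j then A else Aᶜ).Infinite := fun j => by
    cases M j
    · exact hAc
    · exact hA
  obtain ⟨c, hc⟩ := exists_unitriangular_sum_mem Nat.choose_self hS (k + 1)
  refine ⟨c, fun j hj => ?_⟩
  have hmem := hc j (Nat.lt_succ_of_le hj)
  cases hMj : M j <;> simpa [hMj] using hmem
end

section
/- Constant-setting lemma, boundary-event form. Let A ⊆ ℕ be infinite with infinite complement, let k ∈ ℕ, and let M : ℕ → Bool be an arbitrary function. Then there exist natural numbers c_0, …, c_k and a_0, …, a_k such that for every j with 0 ≤ j ≤ k: a_j is a boundary event of A (i.e., a_j ∈ A and a_j + 1 ∉ A), and ∑_{i=0}^{j} (j choose i) · c_i equals a_j if M(j) = true, and equals a_j + 1 if M(j) = false. -/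
/-!
Boundary events of `A` exist above every bound: take some `m ∈ A` beyond it and walk up to the
first non-element of `A` after `m`. The system `∑_{i ≤ j} (j choose i) c_i = t_j` is triangular
with unit diagonal, so the `c_j` can be solved for one after another; they stay natural numbers
because each target `t_j` is chosen as a boundary event (or its successor) above the part
`∑_{i < j} (j choose i) c_i` already fixed by the earlier constants.
-/

open Finset

theorem Nat.exists_between_and_not_succ {p : ℕ → Prop} {m n : ℕ} (hmn : m ≤ n) (hm : p m)
    (hn : ¬ p n) : ∃ ℓ, m ≤ ℓ ∧ ℓ < n ∧ p ℓ ∧ ¬ p (ℓ + 1) := by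
  induction n, hmn using Nat.le_induction with
  | base => exact absurd hm hn
  | succ n hmn ih =>
    by_cases hpn : p n
    · exact ⟨n, hmn, n.lt_succ_self, hpn, hn⟩
    · obtain ⟨ℓ, hmℓ, hℓn, hℓ⟩ := ih hpn
      exact ⟨ℓ, hmℓ, hℓn.trans n.lt_succ_self, hℓ⟩

theorem Set.Infinite.exists_boundary_ge {A : Set ℕ} (hA : A.Infinite) (hAc : Aᶜ.Infinite)
    (N : ℕ) : ∃ ℓ, N ≤ ℓ ∧ ℓ ∈ A ∧ ℓ + 1 ∉ A := by
  obtain ⟨m, hmA, hNm⟩ := hA.exists_gt N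
  obtain ⟨n, hnA, hmn⟩ := hAc.exists_gt m
  obtain ⟨ℓ, hmℓ, -, hℓ⟩ := Nat.exists_between_and_not_succ hmn.le hmA hnA
  exact ⟨ℓ, hNm.le.trans hmℓ, hℓ⟩

/-- Solves `∑_{i ≤ j} (j choose i) c_i = g j (∑_{i < j} (j choose i) c_i)` recursively; this is a
solution only when `N ≤ g j N`, since the subtraction truncates. -/
def binomialSolve (g : ℕ → ℕ → ℕ) (j : ℕ) : ℕ :=
  g j (∑ i : Fin j, j.choose i * binomialSolve g i) -
    ∑ i : Fin j, j.choose i * binomialSolve g i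
decreasing_by all_goals exact i.isLt

theorem sum_choose_mul_binomialSolve (g : ℕ → ℕ → ℕ) (hg : ∀ j N, N ≤ g j N) (j : ℕ) :
    ∑ i ∈ range (j + 1), j.choose i * binomialSolve g i =
      g j (∑ i ∈ range j, j.choose i * binomialSolve g i) := by
  have hprev : ∑ i ∈ range j, j.choose i * binomialSolve g i =
      ∑ i : Fin j, j.choose i * binomialSolve g i :=
    (Fin.sum_univ_eq_sum_range (fun i ↦ j.choose i * binomialSolve g i) j).symm
  rw [sum_range_succ, Nat.choose_self, one_mul, binomialSolve, ← hprev]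
  exact Nat.add_sub_of_le (hg j _)

/-- Constant-setting lemma, boundary-event form: if `A ⊆ ℕ` is infinite and
coinfinite, then for any `k` and any `M : ℕ → Bool` there are constants
`c_0, …, c_k` and boundary events `a_0, …, a_k` of `A` such that for each
`j ≤ k`, the sum `∑_{i=0}^{j} (j choose i) * c_i` equals `a_j` if `M j = true`
and `a_j + 1` if `M j = false`. -/
theorem constant_setting_boundary (A : Set ℕ) (hA : A.Infinite) (hAc : Aᶜ.Infinite)
    (k : ℕ) (M : ℕ → Bool) :
    ∃ c : ℕ → ℕ, ∃ a : ℕ → ℕ, ∀ j ≤ k,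
      (a j ∈ A ∧ a j + 1 ∉ A) ∧
      (∑ i ∈ Finset.range (j + 1), Nat.choose j i * c i) =
        (if M j = true then a j else a j + 1) := by
  choose b hb_ge hb_boundary using hA.exists_boundary_ge hAc
  set g : ℕ → ℕ → ℕ := fun j N ↦ if M j = true then b N else b N + 1
  have hg : ∀ j N, N ≤ g j N := fun j N ↦
    (hb_ge N).trans (by simp only [g]; split <;> omega)
  exact ⟨binomialSolve g, fun j ↦ b (∑ i ∈ range j, j.choose i * binomialSolve g i),
    fun j _ ↦ ⟨hb_boundary _, sum_choose_mul_binomialSolve g hg j⟩⟩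
end
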